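/- Let τ be a noncrossing tree with convex geodesics on a hull configuration P, and let τ' be obtained from τ by sliding the edge e = {p,q} along f = {q,r} (replacing e by e' = {p,r}), where τ' is again a noncrossing tree with convex geodesics. Then for π ∈ Bool(τ), one has π ∈ Bool(τ') if and only if the block of π containing p either contains both q and r or contains neither q nor r. -/

import Mathlib

/-!
In a tree the only way a subgraph can connect the two ends of a path is by containing every
edge of that path. So if `π = Part(μ)` with `μ ⊆ τ` puts `p` and `r` together, `μ` contains
`p - q - r`, and replacing `pq` by `pr` in `μ` gives a subforest of `τ'` with the same partition;
if `π` separates `p` from both `q` and `r`, then `pq ∉ μ` and `μ` is already a subforest of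
`τ'`. Conversely, in `τ'` the path from `p` to `q` is `p - r - q`, so a partition of `Bool(τ')`
joining `p` and `q` also joins `p` and `r`, while one of `Bool(τ)` joining `p` and `r` also
joins `p` and `q`.
-/

open scoped Classical

/-- The vertex type of a finite point configuration `P ⊆ ℂ`. -/
abbrev Vtx (P : Finset ℂ) := {z : ℂ // z ∈ P}

/-- The block (as a set of points of the plane) of the partition `s` containing `a`. -/
def cblock {P : Finset ℂ} (s : Setoid (Vtx P)) (a : Vtx P) : Set ℂ :=
  {w : ℂ | ∃ b : Vtx P, s a b ∧ w = ↑b}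

/-- A partition (setoid) of the points of `P` is noncrossing if the convex hulls of
distinct blocks are pairwise disjoint. -/
def NoncrossingS (P : Finset ℂ) (s : Setoid (Vtx P)) : Prop :=
  ∀ a b : Vtx P, ¬ s a b →
    Disjoint (convexHull ℝ (cblock s a)) (convexHull ℝ (cblock s b))

/-- `P` is a hull configuration: no point of `P` lies in the interior of the convex hull
(this includes the degenerate case of a collinear configuration, whose hull has empty
interior). -/
def IsHullConfig (P : Finset ℂ) : Prop :=
  ∀ z ∈ P, z ∉ interior (convexHull ℝ (↑P : Set ℂ))

/-- The number of blocks of a partition of the points of `P`. -/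
noncomputable def numBlocks {P : Finset ℂ} (s : Setoid (Vtx P)) : ℕ :=
  Set.ncard {C : Set (Vtx P) | ∃ a, C = {b | s a b}}

/-- The rank of a partition in `NC(P)`: `|P|` minus the number of blocks. -/
noncomputable def rkNC {P : Finset ℂ} (s : Setoid (Vtx P)) : ℕ := P.card - numBlocks s

/-- The partition of the points of `P` into connected components of the graph `H`. -/
def partOf {P : Finset ℂ} (H : SimpleGraph (Vtx P)) : Setoid (Vtx P) :=
  ⟨fun a b => H.Reachable a b,
   ⟨fun a => SimpleGraph.Reachable.refl a, fun h => h.symm, fun h h' => h.trans h'⟩⟩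

/-- `Bool(τ)`: the set of partitions `Part(μ)` of subforests (subgraphs) `μ ⊆ τ`. -/
def boolOf {P : Finset ℂ} (G : SimpleGraph (Vtx P)) : Set (Setoid (Vtx P)) :=
  {s | ∃ H ≤ G, s = partOf H}

/-- The straight-line edges of `G` are pairwise noncrossing: two distinct edges meet
at most in common endpoints. -/
def EdgesNoncrossing (P : Finset ℂ) (G : SimpleGraph (Vtx P)) : Prop :=
  ∀ a b c d : Vtx P, G.Adj a b → G.Adj c d →
    ({a, b} : Set (Vtx P)) ≠ {c, d} →
    ∀ x ∈ segment ℝ (a : ℂ) (b : ℂ) ∩ segment ℝ (c : ℂ) (d : ℂ),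
      (x = ↑a ∨ x = ↑b) ∧ (x = ↑c ∨ x = ↑d)

/-- `G` has convex geodesics: for every connected subgraph (subtree), the convex hull of
its vertices contains no points of `P` other than those vertices. -/
def ConvexGeodesics (P : Finset ℂ) (G : SimpleGraph (Vtx P)) : Prop :=
  ∀ S : Set (Vtx P), (G.induce S).Connected →
    ∀ v : Vtx P, (v : ℂ) ∈ convexHull ℝ (Subtype.val '' S) → v ∈ S

/-- A noncrossing (spanning) tree on `P` with convex geodesics. -/
def IsNCTree (P : Finset ℂ) (G : SimpleGraph (Vtx P)) : Prop :=
  G.IsTree ∧ EdgesNoncrossing P G ∧ ConvexGeodesics P G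

namespace SimpleGraph

variable {V : Type*}

theorem reachable_le_reachable_of_adj {G G' : SimpleGraph V}
    (h : ∀ a b, G.Adj a b → G'.Reachable a b) : G.Reachable ≤ G'.Reachable := by
  rw [reachable_eq_reflTransGen, reachable_eq_reflTransGen] at *
  exact Relation.reflTransGen_closed h

theorem IsAcyclic.mem_edgeSet_of_reachable {T H : SimpleGraph V} (hT : T.IsAcyclic) (hH : H ≤ T)
    {u v : V} (huv : H.Reachable u v) {w : T.Walk u v} (hw : w.IsPath) {e : Sym2 V}
    (he : e ∈ w.edges) : e ∈ H.edgeSet := by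
  obtain ⟨w', hw'⟩ := huv.exists_isPath
  have hmap : w'.mapLe hH = w :=
    congrArg Subtype.val ((hT.subsingleton_path u v).elim ⟨w'.mapLe hH, hw'.mapLe hH⟩ ⟨w, hw⟩)
  rw [← hmap, Walk.edges_mapLe_eq_edges] at he
  exact w'.edges_subset_edgeSet he

theorem IsAcyclic.adj_of_reachable {T H : SimpleGraph V} (hT : T.IsAcyclic) (hH : H ≤ T)
    {p q r : V} (hpq : T.Adj p q) (hqr : T.Adj q r) (hpr : p ≠ r) (h : H.Reachable p r) :
    H.Adj p q ∧ H.Adj q r := by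
  have hw : (Walk.cons hpq (Walk.cons hqr Walk.nil)).IsPath := by
    simp [hpq.ne, hqr.ne, hpr]
  exact ⟨hT.mem_edgeSet_of_reachable hH h hw (e := s(p, q)) (by simp),
    hT.mem_edgeSet_of_reachable hH h hw (e := s(q, r)) (by simp)⟩

def slide (G : SimpleGraph V) (p q r : V) : SimpleGraph V :=
  fromEdgeSet ((G.edgeSet \ {s(p, q)}) ∪ {s(p, r)})

variable {G H : SimpleGraph V} {p q r : V}

theorem slide_mono (h : H ≤ G) : H.slide p q r ≤ G.slide p q r :=
  fromEdgeSet_mono (Set.union_subset_union_left _ (Set.sdiff_subset_sdiff_left (edgeSet_mono h)))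

theorem slide_adj_of_ne (hpr : p ≠ r) : (G.slide p q r).Adj p r := by
  simp [slide, hpr]

theorem slide_adj_of_adj {a b : V} (hab : G.Adj a b) (he : s(a, b) ≠ s(p, q)) :
    (G.slide p q r).Adj a b := by
  simp [slide, hab, hab.ne, he]

theorem slide_adj_swap (hqr : G.Adj q r) (hpr : p ≠ r) : (G.slide p q r).Adj r q :=
  slide_adj_of_adj hqr.symm (by simp [hpr.symm, hqr.ne.symm])

theorem le_slide_of_le_of_not_adj (hH : H ≤ G) (hpq : ¬ H.Adj p q) : H ≤ G.slide p q r := by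
  intro a b hab
  refine slide_adj_of_adj (hH hab) ?_
  intro he
  obtain ⟨rfl, rfl⟩ | ⟨rfl, rfl⟩ := Sym2.eq_iff.1 he
  exacts [hpq hab, hpq hab.symm]

theorem reachable_slide (hpq : G.Adj p q) (hqr : G.Adj q r) (hpr : p ≠ r) :
    (G.slide p q r).Reachable = G.Reachable := by
  refine le_antisymm (reachable_le_reachable_of_adj fun a b hab => ?_)
    (reachable_le_reachable_of_adj fun a b hab => ?_)
  · obtain ⟨hab | hab, -⟩ := (fromEdgeSet_adj _).1 hab
    · exact (mem_edgeSet G).1 hab.1 |>.reachable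
    · obtain ⟨rfl, rfl⟩ | ⟨rfl, rfl⟩ := Sym2.eq_iff.1 hab
      exacts [hpq.reachable.trans hqr.reachable, (hpq.reachable.trans hqr.reachable).symm]
  · by_cases he : s(a, b) = s(p, q)
    · have hpq' : (G.slide p q r).Reachable p q :=
        (slide_adj_of_ne hpr).reachable.trans (slide_adj_swap hqr hpr).reachable
      obtain ⟨rfl, rfl⟩ | ⟨rfl, rfl⟩ := Sym2.eq_iff.1 he
      exacts [hpq', hpq'.symm]
    · exact (slide_adj_of_adj hab he).reachable

end SimpleGraph

open SimpleGraph

theorem partOf_inj_iff {P : Finset ℂ} {H H' : SimpleGraph (Vtx P)} :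
    partOf H = partOf H' ↔ H.Reachable = H'.Reachable :=
  ⟨fun h => congrArg (fun s : Setoid (Vtx P) => s.r) h,
    fun h => Setoid.ext fun a b => iff_of_eq (congrFun₂ h a b)⟩

theorem stmt7_general (P : Finset ℂ)
    (G : SimpleGraph (Vtx P)) (hG : IsNCTree P G)
    (p q r : Vtx P) (hpq : G.Adj p q) (hqr : G.Adj q r) (hpr : p ≠ r)
    (hG' : IsNCTree P
      (SimpleGraph.fromEdgeSet ((G.edgeSet \ {s(p, q)}) ∪ {s(p, r)}))) :
    ∀ π ∈ boolOf G,
      (π ∈ boolOf (SimpleGraph.fromEdgeSet ((G.edgeSet \ {s(p, q)}) ∪ {s(p, r)})) ↔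
        ((π p q ∧ π p r) ∨ (¬ π p q ∧ ¬ π p r))) := by
  rintro _ ⟨H, hH, rfl⟩
  change partOf H ∈ boolOf (G.slide p q r) ↔
    (H.Reachable p q ∧ H.Reachable p r) ∨ (¬ H.Reachable p q ∧ ¬ H.Reachable p r)
  have hG'pq : ∀ H' ≤ G.slide p q r, H'.Reachable p q → H'.Adj p r ∧ H'.Adj r q :=
    fun H' hH' => hG'.1.isAcyclic.adj_of_reachable hH' (slide_adj_of_ne hpr)
      (slide_adj_swap hqr hpr) hpq.ne
  have hGpr : H.Reachable p r → H.Adj p q ∧ H.Adj q r :=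
    hG.1.isAcyclic.adj_of_reachable hH hpq hqr hpr
  constructor
  · rintro ⟨H', hH', hHH'⟩
    have hreach : H.Reachable = H'.Reachable := partOf_inj_iff.1 hHH'
    by_cases hq : H.Reachable p q
    · refine .inl ⟨hq, ?_⟩
      rw [hreach] at hq ⊢
      exact (hG'pq H' hH' hq).1.reachable
    · exact .inr ⟨hq, fun hr => hq (hGpr hr).1.reachable⟩
  · rintro (⟨-, hr⟩ | ⟨hq, -⟩)
    · obtain ⟨hpq, hqr⟩ := hGpr hr
      exact ⟨H.slide p q r, slide_mono hH, partOf_inj_iff.2 (reachable_slide hpq hqr hpr).symm⟩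
    · exact ⟨H, le_slide_of_le_of_not_adj hH fun h => hq h.reachable, rfl⟩

/-- Slide lemma: let `τ` be a noncrossing tree with convex geodesics on a hull
configuration `P`, and let `τ'` be obtained from `τ` by sliding the edge `{p,q}` along
`{q,r}` (replacing `{p,q}` by `{p,r}`); assume `τ'` is again a noncrossing tree with
convex geodesics.  Then a partition `π ∈ Bool(τ)` lies in `Bool(τ')` if and only if the
block of `π` containing `p` either contains both `q` and `r` or contains neither. -/
theorem stmt7 (P : Finset ℂ) (hP : IsHullConfig P)
    (G : SimpleGraph (Vtx P)) (hG : IsNCTree P G)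
    (p q r : Vtx P) (hpq : G.Adj p q) (hqr : G.Adj q r) (hpr : p ≠ r)
    (hG' : IsNCTree P
      (SimpleGraph.fromEdgeSet ((G.edgeSet \ {s(p, q)}) ∪ {s(p, r)}))) :
    ∀ π ∈ boolOf G,
      (π ∈ boolOf (SimpleGraph.fromEdgeSet ((G.edgeSet \ {s(p, q)}) ∪ {s(p, r)})) ↔
        ((π p q ∧ π p r) ∨ (¬ π p q ∧ ¬ π p r))) :=
  stmt7_general P G hG p q r hpq hqr hpr hG'
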